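/- In a QoS satisfaction game with T_n^c ≥ 1 for all n and c, every pure Nash equilibrium y* satisfies B(y*) ≥ 1; moreover, if B(y*) < N then B(y*) ≥ C · min_{n,c} T_n^c. -/
import Mathlib


open Finset

/-- Congestion level of channel `c`: number of players choosing `c`. -/
def cong {N C : ℕ} (x : Fin N → Option (Fin C)) (c : Fin C) : ℕ :=
  (Finset.univ.filter fun n => x n = some c).card

/-- Utility of player `n`: 1 if satisfied, 0 if dormant, -1 if suffering. -/
def util {N C : ℕ} (T : Fin N → Fin C → ℤ) (x : Fin N → Option (Fin C)) (n : Fin N) : ℤ :=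
  match x n with
  | none => 0
  | some c => if (cong x c : ℤ) ≤ T n c then 1 else -1

/-- Pure Nash equilibrium: no unilateral deviation strictly improves utility. -/
def IsNash {N C : ℕ} (T : Fin N → Fin C → ℤ) (x : Fin N → Option (Fin C)) : Prop :=
  ∀ (n : Fin N) (s : Option (Fin C)), util T (Function.update x n s) n ≤ util T x n

/-- Number of satisfied players. -/
def B {N C : ℕ} (T : Fin N → Fin C → ℤ) (x : Fin N → Option (Fin C)) : ℕ :=
  (Finset.univ.filter fun n => util T x n = 1).card

lemma util_none {N C : ℕ} (T : Fin N → Fin C → ℤ) (x : Fin N → Option (Fin C))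
    (n : Fin N) (h : x n = none) : util T x n = 0 := by
  simp [util, h]

lemma util_some {N C : ℕ} (T : Fin N → Fin C → ℤ) (x : Fin N → Option (Fin C))
    (n : Fin N) (c : Fin C) (h : x n = some c) :
    util T x n = if (cong x c : ℤ) ≤ T n c then 1 else -1 := by
  simp [util, h]

lemma util_nonneg {N C : ℕ} {T : Fin N → Fin C → ℤ} {y : Fin N → Option (Fin C)}
    (h : IsNash T y) (n : Fin N) : 0 ≤ util T y n := by
  have := h n none
  rwa [util_none T _ n (by simp)] at this

lemma util_eq_one {N C : ℕ} {T : Fin N → Fin C → ℤ} {y : Fin N → Option (Fin C)}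
    (h : IsNash T y) (n : Fin N) (hn : y n ≠ none) : util T y n = 1 := by
  obtain ⟨c, hc⟩ := Option.ne_none_iff_exists'.mp hn
  rw [util_some T y n c hc]
  have h0 := util_nonneg h n
  rw [util_some T y n c hc] at h0
  by_cases hle : (cong y c : ℤ) ≤ T n c
  · simp [hle]
  · simp [hle] at h0

lemma cong_update {N C : ℕ} (y : Fin N → Option (Fin C)) (n0 : Fin N) (c : Fin C)
    (h : y n0 = none) :
    cong (Function.update y n0 (some c)) c = cong y c + 1 := by
  unfold cong
  have hset : (Finset.univ.filter fun m => Function.update y n0 (some c) m = some c)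
      = insert n0 (Finset.univ.filter fun m => y m = some c) := by
    ext m
    by_cases hm : m = n0 <;> simp [hm, Function.update_apply, h]
  rw [hset, Finset.card_insert_of_notMem (by simp [h])]

theorem nash_B_bounds {N C : ℕ} (hN : 0 < N) (hC : 0 < C)
    (T : Fin N → Fin C → ℤ) (hT : ∀ n c, 1 ≤ T n c)
    (y : Fin N → Option (Fin C)) (hnash : IsNash T y) :
    1 ≤ B T y ∧
      (B T y < N →
        (C : ℤ) *
          (Finset.univ ×ˢ Finset.univ).inf'
            ⟨(⟨0, hN⟩, ⟨0, hC⟩), Finset.mem_univ _⟩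
            (fun p : Fin N × Fin C => T p.1 p.2) ≤ (B T y : ℤ)) := by
  -- B counts exactly the players who chose a channel
  have hBeq : B T y = (Finset.univ.filter fun n => y n ≠ none).card := by
    unfold B
    congr 1
    apply Finset.filter_congr
    intro n _
    constructor
    · intro h1 h0
      rw [util_none T y n h0] at h1; exact absurd h1 (by norm_num)
    · intro hne; exact util_eq_one hnash n hne
  constructor
  · -- B ≥ 1
    by_contra hB
    push_neg at hB
    have hB0 : (Finset.univ.filter fun n => y n ≠ none) = ∅ := by
      rw [← Finset.card_eq_zero, ← hBeq]; omega
    have hall : ∀ n, y n = none := by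
      intro n
      by_contra hne
      have hmem : n ∈ (Finset.univ.filter fun n => y n ≠ none) := by simp [hne]
      rw [hB0] at hmem
      simp at hmem
    set n0 : Fin N := ⟨0, hN⟩
    set c0 : Fin C := ⟨0, hC⟩
    have hdev := hnash n0 (some c0)
    rw [util_none T y n0 (hall n0)] at hdev
    rw [util_some T _ n0 c0 (by simp)] at hdev
    have hcong : cong (Function.update y n0 (some c0)) c0 = 1 := by
      rw [cong_update y n0 c0 (hall n0)]
      have : cong y c0 = 0 := by
        unfold cong
        rw [Finset.card_eq_zero]
        ext m; simp [hall m]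
      omega
    rw [hcong] at hdev
    have := hT n0 c0
    simp only [Nat.cast_one, if_pos this] at hdev
    omega
  · intro hBN
    -- there is a dormant player
    have hex : ∃ n0, y n0 = none := by
      by_contra hno
      push_neg at hno
      have : (Finset.univ.filter fun n => y n ≠ none) = Finset.univ := by
        apply Finset.filter_true_of_mem; intro n _; exact hno n
      rw [hBeq, this, Finset.card_univ, Fintype.card_fin] at hBN
      omega
    obtain ⟨n0, hn0⟩ := hex
    -- every channel is congested at least to level T n0 c
    have hcongc : ∀ c : Fin C, T n0 c ≤ (cong y c : ℤ) := by
      intro c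
      have hdev := hnash n0 (some c)
      rw [util_none T y n0 hn0, util_some T _ n0 c (by simp),
        cong_update y n0 c hn0] at hdev
      by_cases hle : ((cong y c + 1 : ℕ) : ℤ) ≤ T n0 c
      · rw [if_pos hle] at hdev; omega
      · push_neg at hle; push_cast at hle ⊢; omega
    set m := (Finset.univ ×ˢ Finset.univ).inf'
      ⟨(⟨0, hN⟩, ⟨0, hC⟩), Finset.mem_univ _⟩
      (fun p : Fin N × Fin C => T p.1 p.2) with hm
    have hmle : ∀ c : Fin C, m ≤ T n0 c := by
      intro c
      exact Finset.inf'_le (fun p : Fin N × Fin C => T p.1 p.2)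
        (Finset.mem_product.mpr ⟨Finset.mem_univ n0, Finset.mem_univ c⟩ :
          (n0, c) ∈ Finset.univ ×ˢ Finset.univ)
    -- sum of congestions equals number of non-dormant players
    have hsum : ∑ c, cong y c = (Finset.univ.filter fun n => y n ≠ none).card := by
      simp only [cong, Finset.card_filter]
      rw [Finset.sum_comm]
      apply Finset.sum_congr rfl
      intro n _
      cases hy : y n with
      | none => simp [hy]
      | some c0 => simp [hy]
    calc (C : ℤ) * m = ∑ _c : Fin C, m := by
          rw [Finset.sum_const, Finset.card_univ, Fintype.card_fin]; ring
      _ ≤ ∑ c, (cong y c : ℤ) := Finset.sum_le_sum fun c _ => le_trans (hmle c) (hcongc c)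
      _ = ((∑ c, cong y c : ℕ) : ℤ) := by push_cast; ring
      _ = (B T y : ℤ) := by rw [hsum, hBeq]
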